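/- arXiv:2402.15807 — 10 statements merged into one kernel-verified Lean document; each statement's English description precedes it below -/
import Mathlib

section
/- Let g be a Lie algebra over a field K of characteristic zero, t ∈ K with t ≠ 0 and t ≠ 1, and D a linear map g → g satisfying t·D⁅X,Y⁆ = ⁅D X, Y⁆ for all X,Y. Then D⁅X,⁅Y,Z⁆⁆ = 0 for all X,Y,Z ∈ g. -/
/-!
Feeding `⁅Y, Z⁆` into the defining identity once gives `t • D ⁅X, ⁅Y, Z⁆⁆ = ⁅D X, ⁅Y, Z⁆⁆`; expanding
the right-hand side by the Jacobi identity and applying the defining identity twice more gives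
`t ^ 2 • D ⁅X, ⁅Y, Z⁆⁆`. Since `t - t ^ 2 = t (1 - t) ≠ 0`, the element `D ⁅X, ⁅Y, Z⁆⁆` vanishes.
-/

theorem lie_lie_eq_sub_lie_lie {L : Type*} [LieRing L] (X Y Z : L) :
    ⁅X, ⁅Y, Z⁆⁆ = ⁅⁅X, Y⁆, Z⁆ - ⁅⁅X, Z⁆, Y⁆ := by
  rw [leibniz_lie X Y Z, ← lie_skew ⁅X, Z⁆ Y, sub_neg_eq_add]

section

variable {R L : Type*} [CommRing R] [LieRing L] [LieAlgebra R L] {t : R} {D : L →ₗ[R] L}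

theorem sq_smul_map_lie_lie_left (hD : ∀ X Y : L, t • D ⁅X, Y⁆ = ⁅D X, Y⁆) (X Y Z : L) :
    t ^ 2 • D ⁅⁅X, Y⁆, Z⁆ = ⁅⁅D X, Y⁆, Z⁆ := by
  rw [pow_two, mul_smul, hD, ← smul_lie, hD]

theorem sq_smul_map_lie_lie (hD : ∀ X Y : L, t • D ⁅X, Y⁆ = ⁅D X, Y⁆) (X Y Z : L) :
    t ^ 2 • D ⁅X, ⁅Y, Z⁆⁆ = t • D ⁅X, ⁅Y, Z⁆⁆ :=
  calc t ^ 2 • D ⁅X, ⁅Y, Z⁆⁆ = t ^ 2 • D (⁅⁅X, Y⁆, Z⁆ - ⁅⁅X, Z⁆, Y⁆) := by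
        rw [lie_lie_eq_sub_lie_lie]
    _ = ⁅⁅D X, Y⁆, Z⁆ - ⁅⁅D X, Z⁆, Y⁆ := by
        rw [map_sub, smul_sub, sq_smul_map_lie_lie_left hD, sq_smul_map_lie_lie_left hD]
    _ = t • D ⁅X, ⁅Y, Z⁆⁆ := by rw [← lie_lie_eq_sub_lie_lie, hD]

end

theorem stmt_4_general {K L : Type*} [Field K] [LieRing L] [LieAlgebra K L]
    (t : K) (ht0 : t ≠ 0) (ht1 : t ≠ 1) (D : L →ₗ[K] L)
    (hD : ∀ X Y : L, t • D ⁅X, Y⁆ = ⁅D X, Y⁆) :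
    ∀ X Y Z : L, D ⁅X, ⁅Y, Z⁆⁆ = 0 := by
  intro X Y Z
  have hcoeff : t - t ^ 2 ≠ 0 := by
    rw [show t - t ^ 2 = t * (1 - t) by ring]
    exact mul_ne_zero ht0 (sub_ne_zero.mpr (Ne.symm ht1))
  have hkill : (t - t ^ 2) • D ⁅X, ⁅Y, Z⁆⁆ = 0 := by
    rw [sub_smul, sq_smul_map_lie_lie hD, sub_self]
  exact (smul_eq_zero.mp hkill).resolve_left hcoeff

theorem stmt_4 {K L : Type*} [Field K] [CharZero K] [LieRing L] [LieAlgebra K L]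
    (t : K) (ht0 : t ≠ 0) (ht1 : t ≠ 1) (D : L →ₗ[K] L)
    (hD : ∀ X Y : L, t • D ⁅X, Y⁆ = ⁅D X, Y⁆) :
    ∀ X Y Z : L, D ⁅X, ⁅Y, Z⁆⁆ = 0 :=
  stmt_4_general t ht0 ht1 D hD
end

section
/- Let g be a perfect Lie algebra over a field K of characteristic zero (i.e., ⁅g,g⁆ = g), and let t ∈ K with t ≠ 0, t ≠ 1. Then every (t,1,0)-derivation of g is the zero map. -/
/-!
Applying the defining identity of a `(t,1,0)`-derivation `D` twice, once before and once after
expanding `⁅⁅X, Y⁆, Z⁆` by the Jacobi identity, gives `t • ⁅D X, ⁅Y, Z⁆⁆ = ⁅D X, ⁅Y, Z⁆⁆`.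
As `t ≠ 1`, every `D X` commutes with all brackets, hence with all of the perfect algebra `L`.
Then `t • D ⁅X, Y⁆ = ⁅D X, Y⁆ = 0`, and `t ≠ 0` makes `D` vanish on brackets, hence on `L`.
-/

theorem lie_lie_eq_lie_lie_add {L : Type*} [LieRing L] (A Y Z : L) :
    ⁅⁅A, Y⁆, Z⁆ = ⁅A, ⁅Y, Z⁆⁆ + ⁅⁅A, Z⁆, Y⁆ := by
  rw [lie_lie, ← lie_skew Y ⁅A, Z⁆, sub_neg_eq_add]

theorem eq_zero_of_smul_eq_self {K V : Type*} [Field K] [AddCommGroup V] [Module K V]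
    {t : K} (ht1 : t ≠ 1) {v : V} (h : t • v = v) : v = 0 := by
  have : (t - 1) • v = 0 := by rw [sub_smul, one_smul, h, sub_self]
  exact (smul_eq_zero.mp this).resolve_left (sub_ne_zero.mpr ht1)

section TDerivation

variable {R L M : Type*} [CommRing R] [LieRing L] [LieAlgebra R L]

theorem LinearMap.eq_zero_of_map_lie_eq_zero [AddCommGroup M] [Module R M]
    (hperfect : Submodule.span R {z : L | ∃ X Y : L, ⁅X, Y⁆ = z} = ⊤) {f : L →ₗ[R] M}
    (hf : ∀ X Y : L, f ⁅X, Y⁆ = 0) : f = 0 :=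
  LinearMap.ext_on hperfect (by rintro _ ⟨X, Y, rfl⟩; exact hf X Y)

variable {t : R} {D : L →ₗ[R] L} (hD : ∀ X Y : L, t • D ⁅X, Y⁆ = ⁅D X, Y⁆)
include hD

theorem smul_smul_map_lie_lie (X Y Z : L) : t • t • D ⁅⁅X, Y⁆, Z⁆ = ⁅⁅D X, Y⁆, Z⁆ := by
  rw [hD, ← smul_lie, hD]

theorem smul_lie_map_lie_lie (X Y Z : L) : t • ⁅D X, ⁅Y, Z⁆⁆ = ⁅D X, ⁅Y, Z⁆⁆ := by
  have h := smul_smul_map_lie_lie hD X Y Z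
  rw [lie_lie_eq_lie_lie_add X Y Z, map_add, smul_add, smul_add, smul_smul_map_lie_lie hD, hD,
    lie_lie_eq_lie_lie_add (D X) Y Z] at h
  exact add_right_cancel h

end TDerivation

theorem stmt_5_general {K L : Type*} [Field K] [LieRing L] [LieAlgebra K L]
    (hperfect : Submodule.span K {z : L | ∃ X Y : L, ⁅X, Y⁆ = z} = ⊤)
    (t : K) (ht0 : t ≠ 0) (ht1 : t ≠ 1) (D : L →ₗ[K] L)
    (hD : ∀ X Y : L, t • D ⁅X, Y⁆ = ⁅D X, Y⁆) :
    D = 0 := by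
  have hcentral : ∀ X Y : L, ⁅D X, Y⁆ = 0 := fun X Y => by
    have had : LieAlgebra.ad K L (D X) = 0 :=
      LinearMap.eq_zero_of_map_lie_eq_zero hperfect fun Y Z =>
        eq_zero_of_smul_eq_self ht1 (smul_lie_map_lie_lie hD X Y Z)
    simpa using LinearMap.congr_fun had Y
  refine LinearMap.eq_zero_of_map_lie_eq_zero hperfect fun X Y => ?_
  have h := hD X Y
  rw [hcentral] at h
  exact (smul_eq_zero.mp h).resolve_left ht0

theorem stmt_5 {K L : Type*} [Field K] [CharZero K] [LieRing L] [LieAlgebra K L]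
    (hperfect : Submodule.span K {z : L | ∃ X Y : L, ⁅X, Y⁆ = z} = ⊤)
    (t : K) (ht0 : t ≠ 0) (ht1 : t ≠ 1) (D : L →ₗ[K] L)
    (hD : ∀ X Y : L, t • D ⁅X, Y⁆ = ⁅D X, Y⁆) :
    D = 0 :=
  stmt_5_general hperfect t ht0 ht1 D hD
end

section
/- Let g be a Lie algebra over K (char 0), t ∈ K with t ≠ 0 and t ≠ 1, and D a (t,1,0)-derivation of g. Then D maps the derived subalgebra ⁅g,g⁆ into ⁅g,g⁆ ∩ Z(g), where Z(g) is the center of g. -/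
/-!
Skew-symmetry turns `t • D ⁅X, Y⁆ = ⁅D X, Y⁆` into `⁅D X, Y⁆ = ⁅X, D Y⁆`. Expanding
`⁅D X, ⁅Y, Z⁆⁆` by the Leibniz rule and pulling `D` out of both terms gives
`t • D ⁅X, ⁅Y, Z⁆⁆ = t² • D ⁅X, ⁅Y, Z⁆⁆`, so `D` kills `⁅L, ⁅L, L⁆⁆` when `t ≠ 0, 1`.
Hence `⁅D x, W⁆ = t • D ⁅x, W⁆ = 0` for `x ∈ ⁅L, L⁆`, while `D ⁅X, Y⁆ = t⁻¹ • ⁅D X, Y⁆`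
stays in `⁅L, L⁆`.
-/

section TDerivation

variable {K L : Type*} [LieRing L]

theorem lie_map_left_eq_lie_map_right [CommRing K] [LieAlgebra K L] {t : K} {D : L →ₗ[K] L}
    (hD : ∀ X Y : L, t • D ⁅X, Y⁆ = ⁅D X, Y⁆) (X Y : L) : ⁅D X, Y⁆ = ⁅X, D Y⁆ :=
  calc ⁅D X, Y⁆ = t • D ⁅X, Y⁆ := (hD X Y).symm
    _ = -(t • D ⁅Y, X⁆) := by rw [← lie_skew X Y, map_neg, smul_neg]
    _ = ⁅X, D Y⁆ := by rw [hD, lie_skew]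

theorem smul_map_lie_lie_eq_sq_smul [CommRing K] [LieAlgebra K L] {t : K} {D : L →ₗ[K] L}
    (hD : ∀ X Y : L, t • D ⁅X, Y⁆ = ⁅D X, Y⁆) (X Y Z : L) :
    t • D ⁅X, ⁅Y, Z⁆⁆ = t ^ 2 • D ⁅X, ⁅Y, Z⁆⁆ := by
  have left : ⁅⁅D X, Y⁆, Z⁆ = t • t • D ⁅⁅X, Y⁆, Z⁆ := by
    rw [← hD X Y, smul_lie, hD]
  have right : ⁅Y, ⁅D X, Z⁆⁆ = t • t • D ⁅Y, ⁅X, Z⁆⁆ := by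
    rw [← hD X Z, lie_smul, ← lie_map_left_eq_lie_map_right hD, hD]
  calc t • D ⁅X, ⁅Y, Z⁆⁆ = ⁅⁅D X, Y⁆, Z⁆ + ⁅Y, ⁅D X, Z⁆⁆ := by rw [hD, leibniz_lie]
    _ = t • t • D (⁅⁅X, Y⁆, Z⁆ + ⁅Y, ⁅X, Z⁆⁆) := by rw [left, right, map_add, smul_add, smul_add]
    _ = t ^ 2 • D ⁅X, ⁅Y, Z⁆⁆ := by rw [← leibniz_lie, sq, mul_smul]

variable [Field K] [LieAlgebra K L] {t : K} {D : L →ₗ[K] L}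

theorem map_lie_lie_eq_zero (ht0 : t ≠ 0) (ht1 : t ≠ 1)
    (hD : ∀ X Y : L, t • D ⁅X, Y⁆ = ⁅D X, Y⁆) (X Y Z : L) : D ⁅X, ⁅Y, Z⁆⁆ = 0 := by
  have hcoeff : t - t ^ 2 ≠ 0 := by
    rw [sq, ← mul_one_sub]
    exact mul_ne_zero ht0 (sub_ne_zero.mpr ht1.symm)
  have h : (t - t ^ 2) • D ⁅X, ⁅Y, Z⁆⁆ = 0 := by
    rw [sub_smul, smul_map_lie_lie_eq_sq_smul hD, sub_self]
  exact (smul_eq_zero.mp h).resolve_left hcoeff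

theorem map_mem_span_lie (ht0 : t ≠ 0) (hD : ∀ X Y : L, t • D ⁅X, Y⁆ = ⁅D X, Y⁆) {x : L}
    (hx : x ∈ Submodule.span K {z : L | ∃ X Y : L, ⁅X, Y⁆ = z}) :
    D x ∈ Submodule.span K {z : L | ∃ X Y : L, ⁅X, Y⁆ = z} := by
  refine (Submodule.span_le (p := (Submodule.span K _).comap D)).mpr ?_ hx
  rintro _ ⟨X, Y, rfl⟩
  have hDXY : D ⁅X, Y⁆ = t⁻¹ • ⁅D X, Y⁆ := by rw [← hD, inv_smul_smul₀ ht0]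
  rw [SetLike.mem_coe, Submodule.mem_comap, hDXY]
  exact Submodule.smul_mem _ _ (Submodule.subset_span ⟨D X, Y, rfl⟩)

theorem map_lie_eq_zero_of_mem_span (ht0 : t ≠ 0) (ht1 : t ≠ 1)
    (hD : ∀ X Y : L, t • D ⁅X, Y⁆ = ⁅D X, Y⁆) (W : L) {x : L}
    (hx : x ∈ Submodule.span K {z : L | ∃ X Y : L, ⁅X, Y⁆ = z}) : D ⁅W, x⁆ = 0 := by
  refine (Submodule.span_le (p := LinearMap.ker (D ∘ₗ LieModule.toEnd K L L W))).mpr ?_ hx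
  rintro _ ⟨X, Y, rfl⟩
  exact map_lie_lie_eq_zero ht0 ht1 hD W X Y

theorem lie_map_eq_zero_of_mem_span (ht0 : t ≠ 0) (ht1 : t ≠ 1)
    (hD : ∀ X Y : L, t • D ⁅X, Y⁆ = ⁅D X, Y⁆) {x : L}
    (hx : x ∈ Submodule.span K {z : L | ∃ X Y : L, ⁅X, Y⁆ = z}) (W : L) : ⁅D x, W⁆ = 0 := by
  rw [← hD, ← lie_skew, map_neg, map_lie_eq_zero_of_mem_span ht0 ht1 hD W hx, neg_zero,
    smul_zero]

end TDerivation

theorem stmt_6_general {K L : Type*} [Field K] [LieRing L] [LieAlgebra K L]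
    (t : K) (ht0 : t ≠ 0) (ht1 : t ≠ 1) (D : L →ₗ[K] L)
    (hD : ∀ X Y : L, t • D ⁅X, Y⁆ = ⁅D X, Y⁆) :
    ∀ x ∈ Submodule.span K {z : L | ∃ X Y : L, ⁅X, Y⁆ = z},
      D x ∈ Submodule.span K {z : L | ∃ X Y : L, ⁅X, Y⁆ = z} ∧ ∀ Y : L, ⁅D x, Y⁆ = 0 :=
  fun _ hx => ⟨map_mem_span_lie ht0 hD hx, lie_map_eq_zero_of_mem_span ht0 ht1 hD hx⟩

theorem stmt_6 {K L : Type*} [Field K] [CharZero K] [LieRing L] [LieAlgebra K L]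
    (t : K) (ht0 : t ≠ 0) (ht1 : t ≠ 1) (D : L →ₗ[K] L)
    (hD : ∀ X Y : L, t • D ⁅X, Y⁆ = ⁅D X, Y⁆) :
    ∀ x ∈ Submodule.span K {z : L | ∃ X Y : L, ⁅X, Y⁆ = z},
      D x ∈ Submodule.span K {z : L | ∃ X Y : L, ⁅X, Y⁆ = z} ∧ ∀ Y : L, ⁅D x, Y⁆ = 0 :=
  stmt_6_general t ht0 ht1 D hD
end

section
/- Let g be a Lie algebra over K (char 0) with g ≠ ⁅g,g⁆, and let t, s ∈ K with t ≠ 0, t ≠ 1, s ≠ 0, s ≠ 1. Then the vector space D(t,1,0)(g) of (t,1,0)-derivations of g is linearly isomorphic to the vector space D(s,1,0)(g) of (s,1,0)-derivations of g. -/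
/-!
For `t ≠ 0, 1`, the Leibniz rule gives `t • D w = t ^ 2 • D w` for a `(t,1,0)`-derivation `D`
and `w = ⁅X, ⁅Y, Z⁆⁆`, so `D` kills `⁅g, ⁅g, g⁆⁆` and maps `⁅g, g⁆` into the center. Let `φ_a` be
multiplication by `a` on `⁅g, g⁆` and the identity on a chosen complement. Then `⁅D (φ_a X), Y⁆`
only sees `D X`, while `D (φ_a ⁅X, Y⁆) = a • D ⁅X, Y⁆`; hence `D ↦ D ∘ φ_{t/s}` maps
`(t,1,0)`-derivations to `(s,1,0)`-derivations, with inverse `D ↦ D ∘ φ_{s/t}`.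
-/

section Defs
variable (K L : Type*) [Field K] [LieRing L] [LieAlgebra K L]

/-- The space of (t,1,0)-derivations of a Lie algebra. -/
def lieDerivSpace (t : K) : Submodule K (L →ₗ[K] L) where
  carrier := {D | ∀ X Y : L, t • D ⁅X, Y⁆ = ⁅D X, Y⁆}
  add_mem' := by
    intro a b ha hb X Y
    simp only [LinearMap.add_apply, smul_add, ha X Y, hb X Y, add_lie]
  zero_mem' := by intro X Y; simp
  smul_mem' := by
    intro c a ha X Y
    simp only [LinearMap.smul_apply, smul_comm t c, ha X Y, smul_lie]

/-- The center of a Lie algebra, as a submodule. -/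
def lieCenterSub : Submodule K L where
  carrier := {X | ∀ Y : L, ⁅X, Y⁆ = 0}
  add_mem' := by intro a b ha hb Y; simp [add_lie, ha Y, hb Y]
  zero_mem' := by intro Y; simp
  smul_mem' := by intro c a ha Y; simp [smul_lie, ha Y]

/-- The derived subalgebra, as a submodule. -/
def lieDerivedSub : Submodule K L :=
  Submodule.span K {z | ∃ X Y : L, ⁅X, Y⁆ = z}

/-- The space Ω(g) of linear maps with image in the center and killing the derived subalgebra. -/
def lieOmega : Submodule K (L →ₗ[K] L) where
  carrier := {T | (∀ x y : L, ⁅T x, y⁆ = 0) ∧ ∀ x ∈ lieDerivedSub K L, T x = 0}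
  add_mem' := by
    intro a b ha hb
    refine ⟨fun x y => ?_, fun x hx => ?_⟩
    · simp [add_lie, ha.1 x y, hb.1 x y]
    · simp [ha.2 x hx, hb.2 x hx]
  zero_mem' := ⟨by simp, by simp⟩
  smul_mem' := by
    intro c a ha
    refine ⟨fun x y => ?_, fun x hx => ?_⟩
    · simp [smul_lie, ha.1 x y]
    · simp [ha.2 x hx]

end Defs

section ScaleRange

variable {K A : Type*} [Field K] [Ring A] [Algebra K A]

/-- For an idempotent `e`, this acts as `a` on the range of `e` and as `1` on its kernel. -/
def scaleRange (e : A) (a : K) : A := 1 + (a - 1) • e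

@[simp]
lemma scaleRange_one (e : A) : scaleRange e (1 : K) = 1 := by
  simp [scaleRange]

lemma scaleRange_mul {e : A} (he : IsIdempotentElem e) (a b : K) :
    scaleRange e a * scaleRange e b = scaleRange e (a * b) := by
  simp only [scaleRange, mul_add, add_mul, one_mul, mul_one, smul_mul_smul_comm, he.eq]
  module

end ScaleRange

section LieDerivSpace

variable {K L : Type*} [Field K] [LieRing L] [LieAlgebra K L] {t : K} {D : L →ₗ[K] L}

lemma lie_apply_left_of_mem_lieDerivSpace (hD : D ∈ lieDerivSpace K L t) (X Y : L) :
    ⁅D X, Y⁆ = t • D ⁅X, Y⁆ :=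
  (hD X Y).symm

lemma lie_apply_right_of_mem_lieDerivSpace (hD : D ∈ lieDerivSpace K L t) (X Y : L) :
    ⁅X, D Y⁆ = t • D ⁅X, Y⁆ := by
  rw [← lie_skew, lie_apply_left_of_mem_lieDerivSpace hD, ← lie_skew X Y, map_neg, smul_neg]

lemma apply_lie_lie_eq_zero_of_mem_lieDerivSpace (ht0 : t ≠ 0) (ht1 : t ≠ 1)
    (hD : D ∈ lieDerivSpace K L t) (X Y Z : L) : D ⁅X, ⁅Y, Z⁆⁆ = 0 := by
  have hsq : t • D ⁅X, ⁅Y, Z⁆⁆ = (t * t) • D ⁅X, ⁅Y, Z⁆⁆ :=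
    calc t • D ⁅X, ⁅Y, Z⁆⁆ = ⁅D X, ⁅Y, Z⁆⁆ := (hD X _)
    _ = ⁅⁅D X, Y⁆, Z⁆ + ⁅Y, ⁅D X, Z⁆⁆ := leibniz_lie _ _ _
    _ = (t * t) • (D ⁅⁅X, Y⁆, Z⁆ + D ⁅Y, ⁅X, Z⁆⁆) := by
        rw [lie_apply_left_of_mem_lieDerivSpace hD X Y, lie_apply_left_of_mem_lieDerivSpace hD X Z,
          smul_lie, lie_smul, lie_apply_left_of_mem_lieDerivSpace hD,
          lie_apply_right_of_mem_lieDerivSpace hD, smul_smul, smul_smul, smul_add]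
    _ = (t * t) • D ⁅X, ⁅Y, Z⁆⁆ := by rw [← map_add, ← leibniz_lie]
  have hcoef : t - t * t ≠ 0 := by
    rw [← mul_one_sub]
    exact mul_ne_zero ht0 (sub_ne_zero.mpr ht1.symm)
  have hzero : (t - t * t) • D ⁅X, ⁅Y, Z⁆⁆ = 0 := by rw [sub_smul, hsq, sub_self]
  exact (smul_eq_zero.mp hzero).resolve_left hcoef

lemma lie_apply_eq_zero_of_mem_lieDerivedSub (ht0 : t ≠ 0) (ht1 : t ≠ 1)
    (hD : D ∈ lieDerivSpace K L t) {z : L} (hz : z ∈ lieDerivedSub K L) (Y : L) :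
    ⁅D z, Y⁆ = 0 := by
  induction hz using Submodule.span_induction with
  | mem w hw =>
    obtain ⟨A, B, rfl⟩ := hw
    rw [lie_apply_left_of_mem_lieDerivSpace hD, lie_lie, map_sub,
      apply_lie_lie_eq_zero_of_mem_lieDerivSpace ht0 ht1 hD,
      apply_lie_lie_eq_zero_of_mem_lieDerivSpace ht0 ht1 hD, sub_self, smul_zero]
  | zero => simp
  | add x y _ _ ihx ihy => rw [map_add, add_lie, ihx, ihy, add_zero]
  | smul c x _ ihx => rw [map_smul, smul_lie, ihx, smul_zero]

lemma comp_mem_lieDerivSpace {s : K} (ht0 : t ≠ 0) (ht1 : t ≠ 1)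
    (hD : D ∈ lieDerivSpace K L t) {φ : L →ₗ[K] L}
    (hφ : ∀ z ∈ lieDerivedSub K L, s • φ z = t • z) (hφ_sub : ∀ x, φ x - x ∈ lieDerivedSub K L) :
    D ∘ₗ φ ∈ lieDerivSpace K L s := by
  intro X Y
  have hbracket : ⁅X, Y⁆ ∈ lieDerivedSub K L := Submodule.subset_span ⟨X, Y, rfl⟩
  have hcentral := lie_apply_eq_zero_of_mem_lieDerivedSub ht0 ht1 hD (hφ_sub X) Y
  rw [LinearMap.comp_apply, LinearMap.comp_apply, ← map_smul, hφ _ hbracket, map_smul, hD,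
    eq_comm, ← sub_eq_zero, ← sub_lie, ← map_sub, hcentral]

lemma comp_scaleRange_mem_lieDerivSpace {p : L →ₗ[K] L}
    (hp : LinearMap.IsProj (lieDerivedSub K L) p) {s : K} (ht0 : t ≠ 0) (ht1 : t ≠ 1)
    (hs0 : s ≠ 0) (hD : D ∈ lieDerivSpace K L t) :
    D ∘ₗ scaleRange p (t / s) ∈ lieDerivSpace K L s := by
  refine comp_mem_lieDerivSpace ht0 ht1 hD (fun z hz => ?_) (fun x => ?_)
  · simp only [scaleRange, LinearMap.add_apply, Module.End.one_apply, LinearMap.smul_apply,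
      hp.map_id z hz, smul_add, smul_smul, ← add_smul]
    congr 1
    field_simp
    ring
  · simpa [scaleRange] using Submodule.smul_mem _ _ (hp.map_mem x)

def lieDerivSpaceEquiv {p : L →ₗ[K] L} (hp : LinearMap.IsProj (lieDerivedSub K L) p) {s : K}
    (ht0 : t ≠ 0) (ht1 : t ≠ 1) (hs0 : s ≠ 0) (hs1 : s ≠ 1) :
    lieDerivSpace K L t ≃ₗ[K] lieDerivSpace K L s :=
  have hcomp {a b : K} (ha : a ≠ 0) (hb : b ≠ 0) (D : L →ₗ[K] L) :
      D ∘ₗ scaleRange p (a / b) ∘ₗ scaleRange p (b / a) = D := by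
    rw [← Module.End.mul_eq_comp (scaleRange p _), scaleRange_mul hp.isIdempotentElem,
      div_mul_div_cancel₀ hb, div_self ha, scaleRange_one, Module.End.one_eq_id, LinearMap.comp_id]
  LinearEquiv.ofLinearMap
    ((LinearMap.lcomp K L (scaleRange p (t / s))).restrict
      fun _ hD => comp_scaleRange_mem_lieDerivSpace hp ht0 ht1 hs0 hD)
    ((LinearMap.lcomp K L (scaleRange p (s / t))).restrict
      fun _ hD => comp_scaleRange_mem_lieDerivSpace hp hs0 hs1 ht0 hD)
    (by ext D : 2; exact hcomp hs0 ht0 D)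
    (by ext D : 2; exact hcomp ht0 hs0 D)

end LieDerivSpace

theorem stmt_7_general {K L : Type*} [Field K] [LieRing L] [LieAlgebra K L]
    (t s : K) (ht0 : t ≠ 0) (ht1 : t ≠ 1) (hs0 : s ≠ 0) (hs1 : s ≠ 1) :
    Nonempty (lieDerivSpace K L t ≃ₗ[K] lieDerivSpace K L s) := by
  obtain ⟨q, hq⟩ := (lieDerivedSub K L).exists_isCompl
  have hp : LinearMap.IsProj (lieDerivedSub K L) ((lieDerivedSub K L).projection q hq) :=
    ⟨Submodule.projection_apply_mem hq, fun _ hx => Submodule.projection_apply_of_mem_left hq hx⟩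
  exact ⟨lieDerivSpaceEquiv hp ht0 ht1 hs0 hs1⟩

theorem stmt_7 {K L : Type*} [Field K] [CharZero K] [LieRing L] [LieAlgebra K L]
    (hnonperfect : lieDerivedSub K L ≠ ⊤)
    (t s : K) (ht0 : t ≠ 0) (ht1 : t ≠ 1) (hs0 : s ≠ 0) (hs1 : s ≠ 1) :
    Nonempty (lieDerivSpace K L t ≃ₗ[K] lieDerivSpace K L s) :=
  stmt_7_general t s ht0 ht1 hs0 hs1
end

section
/- Let g be a finite-dimensional non-perfect Lie algebra over K (char 0) and t ∈ K with t ≠ 0, t ≠ 1. Then dim Ω(g) ≤ dim D(t,1,0)(g) ≤ dim Ω(g) + dim Hom(⁅g,g⁆, Z(g) ∩ ⁅g,g⁆). -/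
section

variable {K L : Type*} [Field K] [LieRing L] [LieAlgebra K L]

theorem lieOmega_le_lieDerivSpace (t : K) : lieOmega K L ≤ lieDerivSpace K L t := by
  intro T hT X Y
  rw [hT.2 ⁅X, Y⁆ (Submodule.subset_span ⟨X, Y, rfl⟩), smul_zero, hT.1 X Y]

theorem mem_lieOmega_of_mem_lieDerivSpace {t : K} {D : L →ₗ[K] L}
    (hD : D ∈ lieDerivSpace K L t) (hker : ∀ x ∈ lieDerivedSub K L, D x = 0) :
    D ∈ lieOmega K L :=
  ⟨fun x y => by rw [← hD x y, hker _ (Submodule.subset_span ⟨x, y, rfl⟩), smul_zero], hker⟩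

namespace lieDerivSpace

variable {t : K} {D : L →ₗ[K] L}

theorem lie_apply_eq_lie_apply (hD : D ∈ lieDerivSpace K L t) (A B : L) :
    ⁅D A, B⁆ = ⁅A, D B⁆ :=
  calc ⁅D A, B⁆ = t • D ⁅A, B⁆ := (hD A B).symm
    _ = -(t • D ⁅B, A⁆) := by rw [← smul_neg, ← map_neg, lie_skew]
    _ = ⁅A, D B⁆ := by rw [hD B A, lie_skew]

theorem lie_apply_lie_eq_zero (ht1 : t ≠ 1) (hD : D ∈ lieDerivSpace K L t) (X Y Z : L) :
    ⁅D ⁅X, Y⁆, Z⁆ = 0 := by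
  -- The Jacobi identity expands `⁅D ⁅X, Y⁆, Z⁆` both as `A - B` and as `t • (A - B)`.
  set A := ⁅D X, ⁅Y, Z⁆⁆
  set B := ⁅D Y, ⁅X, Z⁆⁆
  have h₁ : ⁅D ⁅X, Y⁆, Z⁆ = A - B := by
    rw [← hD ⁅X, Y⁆ Z, lie_lie, map_sub, smul_sub, hD X ⁅Y, Z⁆, hD Y ⁅X, Z⁆]
  have h₂ : ⁅D ⁅X, Y⁆, Z⁆ = t • (A - B) :=
    calc ⁅D ⁅X, Y⁆, Z⁆ = ⁅X, ⁅Y, D Z⁆⁆ - ⁅Y, ⁅X, D Z⁆⁆ := by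
          rw [lie_apply_eq_lie_apply hD, lie_lie]
      _ = ⁅X, t • D ⁅Y, Z⁆⁆ - ⁅Y, t • D ⁅X, Z⁆⁆ := by
          rw [← lie_apply_eq_lie_apply hD Y Z, ← lie_apply_eq_lie_apply hD X Z, hD Y Z, hD X Z]
      _ = t • (A - B) := by
          rw [lie_smul, lie_smul, ← lie_apply_eq_lie_apply hD X, ← lie_apply_eq_lie_apply hD Y,
            smul_sub]
  have h : (1 - t) • (A - B) = 0 := by rw [sub_smul, one_smul, ← h₂, ← h₁, sub_self]
  rw [h₁, (smul_eq_zero.mp h).resolve_left (sub_ne_zero.mpr ht1.symm)]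

theorem apply_mem_of_mem_lieDerivedSub (ht0 : t ≠ 0) (ht1 : t ≠ 1)
    (hD : D ∈ lieDerivSpace K L t) {x : L} (hx : x ∈ lieDerivedSub K L) :
    D x ∈ lieCenterSub K L ⊓ lieDerivedSub K L := by
  suffices lieDerivedSub K L ≤ (lieCenterSub K L ⊓ lieDerivedSub K L).comap D from this hx
  rw [lieDerivedSub, Submodule.span_le]
  rintro _ ⟨X, Y, rfl⟩
  refine ⟨lie_apply_lie_eq_zero ht1 hD X Y, ?_⟩
  have : D ⁅X, Y⁆ = t⁻¹ • ⁅D X, Y⁆ := by rw [← hD X Y, inv_smul_smul₀ ht0]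
  rw [this]
  exact Submodule.smul_mem _ _ (Submodule.subset_span ⟨D X, Y, rfl⟩)

end lieDerivSpace

variable {t : K}

def restrictLieDerivedSub (ht0 : t ≠ 0) (ht1 : t ≠ 1) :
    lieDerivSpace K L t →ₗ[K]
      (lieDerivedSub K L →ₗ[K] ↥(lieCenterSub K L ⊓ lieDerivedSub K L)) where
  toFun D := D.1.restrict fun _ => lieDerivSpace.apply_mem_of_mem_lieDerivedSub ht0 ht1 D.2
  map_add' _ _ := rfl
  map_smul' _ _ := rfl

theorem finrank_ker_restrictLieDerivedSub_le [FiniteDimensional K L] (ht0 : t ≠ 0) (ht1 : t ≠ 1) :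
    Module.finrank K (LinearMap.ker (restrictLieDerivedSub (L := L) ht0 ht1)) ≤
      Module.finrank K (lieOmega K L) := by
  rw [← Submodule.finrank_map_subtype_eq]
  refine Submodule.finrank_mono ?_
  rintro _ ⟨D, hD, rfl⟩
  refine mem_lieOmega_of_mem_lieDerivSpace D.2 fun x hx => ?_
  exact congrArg Subtype.val (LinearMap.congr_fun (LinearMap.mem_ker.mp hD) ⟨x, hx⟩)

end

theorem stmt_11_general {K L : Type*} [Field K] [LieRing L] [LieAlgebra K L]
    [FiniteDimensional K L]
    (t : K) (ht0 : t ≠ 0) (ht1 : t ≠ 1) :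
    Module.finrank K (lieOmega K L) ≤ Module.finrank K (lieDerivSpace K L t) ∧
      Module.finrank K (lieDerivSpace K L t) ≤
        Module.finrank K (lieOmega K L) +
          Module.finrank K
            (↥(lieDerivedSub K L) →ₗ[K] ↥(lieCenterSub K L ⊓ lieDerivedSub K L)) := by
  refine ⟨Submodule.finrank_mono (lieOmega_le_lieDerivSpace t), ?_⟩
  have hker := finrank_ker_restrictLieDerivedSub_le (L := L) ht0 ht1
  have hrange := Submodule.finrank_le (LinearMap.range (restrictLieDerivedSub (L := L) ht0 ht1))
  have hrank := (restrictLieDerivedSub (L := L) ht0 ht1).finrank_range_add_finrank_ker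
  omega

theorem stmt_11 {K L : Type*} [Field K] [CharZero K] [LieRing L] [LieAlgebra K L]
    [FiniteDimensional K L]
    (hnonperfect : lieDerivedSub K L ≠ ⊤)
    (t : K) (ht0 : t ≠ 0) (ht1 : t ≠ 1) :
    Module.finrank K (lieOmega K L) ≤ Module.finrank K (lieDerivSpace K L t) ∧
      Module.finrank K (lieDerivSpace K L t) ≤
        Module.finrank K (lieOmega K L) +
          Module.finrank K
            (↥(lieDerivedSub K L) →ₗ[K] ↥(lieCenterSub K L ⊓ lieDerivedSub K L)) :=
  stmt_11_general t ht0 ht1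
end

section
/- Let A be an anti-commutative algebra over K (char 0), and suppose B is a subalgebra of A such that A = B ⊕ Z(A) as vector spaces, where Z(A) is the center. Let t ∈ K, t ≠ 0. Then D(t,1,0)(A) is linearly isomorphic to D(t,1,0)(B) × Hom(A/A^(2), Z(A)). -/
section Defs
variable {K V : Type*} [Field K] [AddCommGroup V] [Module K V]

/-- The space of (t,1,0)-derivations of an algebra with product μ. -/
def derivSpace (μ : V →ₗ[K] V →ₗ[K] V) (t : K) : Submodule K (V →ₗ[K] V) where
  carrier := {D | ∀ X Y : V, t • D (μ X Y) = μ (D X) Y}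
  add_mem' := by
    intro a b ha hb X Y
    simp only [LinearMap.add_apply, smul_add, ha X Y, hb X Y, map_add, LinearMap.add_apply]
  zero_mem' := by intro X Y; simp
  smul_mem' := by
    intro c a ha X Y
    simp only [LinearMap.smul_apply, map_smul, LinearMap.smul_apply, smul_comm t c, ha X Y]

/-- The center of the algebra, as a submodule. -/
def centerSub (μ : V →ₗ[K] V →ₗ[K] V) : Submodule K V where
  carrier := {X | ∀ Y : V, μ X Y = 0}
  add_mem' := by intro a b ha hb Y; simp [ha Y, hb Y]
  zero_mem' := by intro Y; simp
  smul_mem' := by intro c a ha Y; simp [ha Y]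

/-- The derived subalgebra (span of all products), as a submodule. -/
def derivedSub (μ : V →ₗ[K] V →ₗ[K] V) : Submodule K V :=
  Submodule.span K {z | ∃ X Y : V, μ X Y = z}

/-- The space Ω of linear maps with image in the center killing the derived subalgebra. -/
def omegaSub (μ : V →ₗ[K] V →ₗ[K] V) : Submodule K (V →ₗ[K] V) where
  carrier := {T | (∀ x y : V, μ (T x) y = 0) ∧ ∀ x ∈ derivedSub μ, T x = 0}
  add_mem' := by
    intro a b ha hb
    refine ⟨fun x y => ?_, fun x hx => ?_⟩
    · simp [ha.1 x y, hb.1 x y]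
    · simp [ha.2 x hx, hb.2 x hx]
  zero_mem' := ⟨by simp, by simp⟩
  smul_mem' := by
    intro c a ha
    refine ⟨fun x y => ?_, fun x hx => ?_⟩
    · simp [ha.1 x y]
    · simp [ha.2 x hx]

end Defs

/-! The centre annihilates A on both sides (by anticommutativity), so the product only sees
B-components and A^(2) ⊆ B. A (t,1,0)-derivation D preserves Z(A) and, since t ≠ 0, maps A^(2)
into B. So D is the sum of its B-block, a (t,1,0)-derivation of B, and its Z(A)-component, a map
into Z(A) vanishing on A^(2), i.e. an element of Hom(A/A^(2), Z(A)); conversely each such pair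
assembles to a derivation of A. -/

section DerivSpace

variable {K V : Type*} [Field K] [AddCommGroup V] [Module K V] {μ : V →ₗ[K] V →ₗ[K] V}

theorem apply_eq_zero_of_mem_centerSub_right (hanti : ∀ X Y : V, μ X Y = -μ Y X)
    {z : V} (hz : z ∈ centerSub μ) (y : V) : μ y z = 0 := by
  rw [hanti, hz y, neg_zero]

variable {B : Submodule K V}

theorem apply_projection_left (h : IsCompl B (centerSub μ)) (X Y : V) :
    μ (B.projection _ h X) Y = μ X Y := by
  conv_rhs => rw [← Submodule.projection_add_projection_eq_self h X]
  rw [map_add, LinearMap.add_apply, (Submodule.projection_apply_mem h.symm X) Y, add_zero]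

theorem apply_projection_right (hanti : ∀ X Y : V, μ X Y = -μ Y X)
    (h : IsCompl B (centerSub μ)) (X Y : V) : μ X (B.projection _ h Y) = μ X Y := by
  conv_rhs => rw [← Submodule.projection_add_projection_eq_self h Y]
  rw [map_add,
    apply_eq_zero_of_mem_centerSub_right hanti (Submodule.projection_apply_mem h.symm Y), add_zero]

theorem apply_mem_of_isCompl_centerSub (hanti : ∀ X Y : V, μ X Y = -μ Y X)
    (hB : ∀ x ∈ B, ∀ y ∈ B, μ x y ∈ B) (h : IsCompl B (centerSub μ)) (X Y : V) :
    μ X Y ∈ B := by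
  rw [← apply_projection_left h, ← apply_projection_right hanti h]
  exact hB _ (Submodule.projection_apply_mem h X) _ (Submodule.projection_apply_mem h Y)

variable {t : K} {D : V →ₗ[K] V}

theorem apply_mem_centerSub_of_mem_derivSpace (hD : D ∈ derivSpace μ t) {z : V}
    (hz : z ∈ centerSub μ) : D z ∈ centerSub μ := fun Y => by
  rw [← hD z Y, hz Y, map_zero, smul_zero]

theorem apply_mem_of_mem_derivSpace (ht : t ≠ 0) (hD : D ∈ derivSpace μ t)
    (hprod : ∀ X Y : V, μ X Y ∈ B) (X Y : V) : D (μ X Y) ∈ B := by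
  rw [← inv_smul_smul₀ ht (D (μ X Y)), hD X Y]
  exact B.smul_mem _ (hprod _ _)

theorem omegaSub_le_derivSpace : omegaSub μ ≤ derivSpace μ t := by
  intro T hT X Y
  rw [hT.2 _ (Submodule.subset_span ⟨X, Y, rfl⟩), smul_zero, hT.1]

theorem projectionOnto_comp_comp_subtype_mem_derivSpace {μB : B →ₗ[K] B →ₗ[K] B}
    (hμB : ∀ x y : B, (μB x y : V) = μ x y) (h : IsCompl B (centerSub μ))
    (hD : D ∈ derivSpace μ t) (hDB : ∀ X Y : V, D (μ X Y) ∈ B) :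
    B.projectionOnto _ h ∘ₗ D ∘ₗ B.subtype ∈ derivSpace μB t := by
  intro x y
  apply Subtype.ext
  simp only [LinearMap.comp_apply, Submodule.coe_smul, hμB, Submodule.coe_subtype,
    Submodule.coe_projectionOnto_apply]
  rw [Submodule.projection_apply_of_mem_left h (hDB x y), hD, apply_projection_left h]

theorem subtype_comp_comp_projectionOnto_mem_derivSpace (hanti : ∀ X Y : V, μ X Y = -μ Y X)
    (hprod : ∀ X Y : V, μ X Y ∈ B) {μB : B →ₗ[K] B →ₗ[K] B}
    (hμB : ∀ x y : B, (μB x y : V) = μ x y) (h : IsCompl B (centerSub μ))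
    {D' : B →ₗ[K] B} (hD' : D' ∈ derivSpace μB t) :
    B.subtype ∘ₗ D' ∘ₗ B.projectionOnto _ h ∈ derivSpace μ t := by
  intro X Y
  have hμ : B.projectionOnto _ h (μ X Y) =
      μB (B.projectionOnto _ h X) (B.projectionOnto _ h Y) := by
    ext
    rw [hμB, Submodule.coe_projectionOnto_apply, Submodule.coe_projectionOnto_apply,
      Submodule.coe_projectionOnto_apply, Submodule.projection_apply_of_mem_left h (hprod X Y),
      apply_projection_left h, apply_projection_right hanti h]
  simp only [LinearMap.comp_apply, Submodule.coe_subtype, hμ]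
  rw [← Submodule.coe_smul, hD', hμB, Submodule.coe_projectionOnto_apply,
    apply_projection_right hanti h]

theorem projection_comp_mem_omegaSub (h : IsCompl B (centerSub μ))
    (hDB : ∀ X Y : V, D (μ X Y) ∈ B) :
    (centerSub μ).projection B h.symm ∘ₗ D ∈ omegaSub μ := by
  refine ⟨fun x => Submodule.projection_apply_mem h.symm (D x), fun x hx => ?_⟩
  refine (Submodule.span_le (p := LinearMap.ker _)).mpr ?_ hx
  rintro _ ⟨X, Y, rfl⟩
  exact Submodule.projection_apply_of_mem_right h.symm (hDB X Y)

variable (μ) in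
def omegaSubEquiv : omegaSub μ ≃ₗ[K] (V ⧸ derivedSub μ →ₗ[K] centerSub μ) where
  toFun T := (derivedSub μ).liftQ (T.1.codRestrict (centerSub μ) T.2.1)
    fun x hx => Subtype.ext (T.2.2 x hx)
  invFun S := ⟨(centerSub μ).subtype ∘ₗ S ∘ₗ (derivedSub μ).mkQ, fun x => (S _).2,
    fun x hx => by simp [(Submodule.Quotient.mk_eq_zero _).mpr hx]⟩
  map_add' _ _ := Submodule.linearMap_qext _ rfl
  map_smul' _ _ := Submodule.linearMap_qext _ rfl
  left_inv _ := rfl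
  right_inv _ := Submodule.linearMap_qext _ rfl

noncomputable def derivSpaceEquivProdOmegaSub (hanti : ∀ X Y : V, μ X Y = -μ Y X)
    (hprod : ∀ X Y : V, μ X Y ∈ B) {μB : B →ₗ[K] B →ₗ[K] B}
    (hμB : ∀ x y : B, (μB x y : V) = μ x y) (h : IsCompl B (centerSub μ)) (ht : t ≠ 0) :
    derivSpace μ t ≃ₗ[K] derivSpace μB t × omegaSub μ where
  toFun D :=
    (⟨_, projectionOnto_comp_comp_subtype_mem_derivSpace hμB h D.2
        (apply_mem_of_mem_derivSpace ht D.2 hprod)⟩,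
      ⟨_, projection_comp_mem_omegaSub h (apply_mem_of_mem_derivSpace ht D.2 hprod)⟩)
  invFun p := ⟨B.subtype ∘ₗ p.1.1 ∘ₗ B.projectionOnto _ h + p.2.1,
    add_mem (subtype_comp_comp_projectionOnto_mem_derivSpace hanti hprod hμB h p.1.2)
      (omegaSub_le_derivSpace p.2.2)⟩
  map_add' D E := by ext <;> simp
  map_smul' c D := by ext <;> simp
  left_inv D := by
    ext X
    have hDZ : B.projection _ h (D.1 ((centerSub μ).projection B h.symm X)) = 0 :=
      Submodule.projection_apply_of_mem_right h
        (apply_mem_centerSub_of_mem_derivSpace D.2 (Submodule.projection_apply_mem h.symm X))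
    calc B.projection _ h (D.1 (B.projection _ h X)) + (centerSub μ).projection B h.symm (D.1 X)
        = B.projection _ h (D.1 (B.projection _ h X + (centerSub μ).projection B h.symm X)) +
            (centerSub μ).projection B h.symm (D.1 X) := by rw [map_add, map_add, hDZ, add_zero]
      _ = D.1 X := by
        rw [Submodule.projection_add_projection_eq_self h X,
          Submodule.projection_add_projection_eq_self h (D.1 X)]
  right_inv p := by
    ext x
    · simp [Submodule.projection_apply_of_mem_right h (p.2.2.1 _)]
    · simp [Submodule.projection_apply_of_mem_left h.symm (p.2.2.1 x)]

end DerivSpace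

theorem stmt_12_general {K V : Type*} [Field K] [AddCommGroup V] [Module K V]
    (μ : V →ₗ[K] V →ₗ[K] V) (hanti : ∀ X Y : V, μ X Y = -μ Y X)
    (B : Submodule K V) (hB : ∀ x ∈ B, ∀ y ∈ B, μ x y ∈ B)
    (μB : ↥B →ₗ[K] ↥B →ₗ[K] ↥B) (hμB : ∀ x y : B, (μB x y : V) = μ (x : V) (y : V))
    (hcompl : IsCompl B (centerSub μ))
    (t : K) (ht : t ≠ 0) :
    Nonempty (derivSpace μ t ≃ₗ[K]
      derivSpace μB t × ((V ⧸ derivedSub μ) →ₗ[K] ↥(centerSub μ))) :=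
  ⟨(derivSpaceEquivProdOmegaSub hanti (apply_mem_of_isCompl_centerSub hanti hB hcompl) hμB
      hcompl ht).trans ((LinearEquiv.refl K _).prodCongr (omegaSubEquiv μ))⟩

theorem stmt_12 {K V : Type*} [Field K] [CharZero K] [AddCommGroup V] [Module K V]
    (μ : V →ₗ[K] V →ₗ[K] V) (hanti : ∀ X Y : V, μ X Y = -μ Y X)
    (B : Submodule K V) (hB : ∀ x ∈ B, ∀ y ∈ B, μ x y ∈ B)
    (μB : ↥B →ₗ[K] ↥B →ₗ[K] ↥B) (hμB : ∀ x y : B, (μB x y : V) = μ (x : V) (y : V))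
    (hcompl : IsCompl B (centerSub μ))
    (t : K) (ht : t ≠ 0) :
    Nonempty (derivSpace μ t ≃ₗ[K]
      derivSpace μB t × ((V ⧸ derivedSub μ) →ₗ[K] ↥(centerSub μ))) :=
  stmt_12_general μ hanti B hB μB hμB hcompl t ht
end

section
/- Let K be an algebraically closed field of characteristic zero, t ∈ K with t ≠ 0, t ≠ 1, and t not a root of unity. Let A be a finite-dimensional anti-commutative K-algebra with trivial center. Then every (t,1,0)-derivation of A is a nilpotent linear transformation. -/
/-! If `D x = c • x` with `x ≠ 0`, triviality of the center gives `y` with `μ x y ≠ 0`, and the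
derivation identity makes `μ x y` an eigenvector for `c / t`. Hence every `c / t ^ n` is an
eigenvalue of `D`; as there are finitely many eigenvalues and `t` is not a root of unity, `c = 0`.
Over an algebraically closed field an endomorphism whose only eigenvalue is `0` is nilpotent. -/

open Module.End

theorem Module.End.isNilpotent_of_forall_hasEigenvalue_eq_zero {K V : Type*} [Field K]
    [IsAlgClosed K] [AddCommGroup V] [Module K V] [FiniteDimensional K V] (f : End K V)
    (h : ∀ c, f.HasEigenvalue c → c = 0) : IsNilpotent f := by
  have htop : f.maxGenEigenspace 0 = ⊤ := by
    refine top_le_iff.mp (iSup_maxGenEigenspace_eq_top f ▸ iSup_le fun c => ?_)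
    by_cases hc : c = 0
    · rw [hc]
    · have : ¬ f.HasUnifEigenvalue c ⊤ := by
        rw [hasUnifEigenvalue_iff_hasUnifEigenvalue_one (by simp)]
        exact mt (h c) hc
      simp only [HasUnifEigenvalue, ne_eq, not_not] at this
      simp [this]
  refine ((LinearMap.charpoly_nilpotent_tfae f).out 0 2).mpr fun m => ?_
  simpa using (f.mem_maxGenEigenspace 0 m).mp (htop ▸ Submodule.mem_top)

theorem injective_div_pow {K : Type*} [Field K] {t c : K} (ht : t ≠ 0)
    (hroot : ∀ n : ℕ, n ≠ 0 → t ^ n ≠ 1) (hc : c ≠ 0) :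
    Function.Injective fun n : ℕ => c / t ^ n := by
  have hu : ¬ IsOfFinOrder (Units.mk0 t ht) := by
    rw [isOfFinOrder_iff_pow_eq_one]
    rintro ⟨n, hn, h⟩
    exact hroot n hn.ne' (by simpa [Units.ext_iff] using h)
  intro a b h
  apply injective_pow_iff_not_isOfFinOrder.mpr hu
  simpa [Units.ext_iff, div_eq_mul_inv, hc, ht] using h

section Derivation

variable {K V : Type*} [Field K] [AddCommGroup V] [Module K V]
  {μ : V →ₗ[K] V →ₗ[K] V} {t : K} {D : Module.End K V}

theorem hasEigenvalue_div_of_mem_derivSpace (ht : t ≠ 0) (hcenter : centerSub μ = ⊥)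
    (hD : D ∈ derivSpace μ t) {c : K} (hc : D.HasEigenvalue c) :
    D.HasEigenvalue (c / t) := by
  obtain ⟨x, hx⟩ := hc.exists_hasEigenvector
  obtain ⟨y, hy⟩ : ∃ y, μ x y ≠ 0 := by
    by_contra! h
    exact hx.2 ((Submodule.mem_bot K).mp (hcenter ▸ h))
  refine hasEigenvalue_of_hasEigenvector ⟨mem_eigenspace_iff.mpr ?_, hy⟩
  rw [← inv_smul_smul₀ ht (D _), hD, hx.apply_eq_smul, LinearMap.map_smul₂, smul_smul,
    div_eq_inv_mul]

theorem hasEigenvalue_div_pow_of_mem_derivSpace (ht : t ≠ 0) (hcenter : centerSub μ = ⊥)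
    (hD : D ∈ derivSpace μ t) {c : K} (hc : D.HasEigenvalue c) (n : ℕ) :
    D.HasEigenvalue (c / t ^ n) := by
  induction n with
  | zero => simpa using hc
  | succ n ih =>
    simpa [pow_succ, div_div] using hasEigenvalue_div_of_mem_derivSpace ht hcenter hD ih

theorem eq_zero_of_hasEigenvalue_of_mem_derivSpace [FiniteDimensional K V] (ht : t ≠ 0)
    (hroot : ∀ n : ℕ, n ≠ 0 → t ^ n ≠ 1) (hcenter : centerSub μ = ⊥)
    (hD : D ∈ derivSpace μ t) {c : K} (hc : D.HasEigenvalue c) : c = 0 := by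
  by_contra hc0
  exact Set.infinite_of_injective_forall_mem (injective_div_pow ht hroot hc0)
    (hasEigenvalue_div_pow_of_mem_derivSpace ht hcenter hD hc) D.finite_hasEigenvalue

end Derivation

theorem stmt_13_general {K V : Type*} [Field K] [IsAlgClosed K]
    [AddCommGroup V] [Module K V] [FiniteDimensional K V]
    (μ : V →ₗ[K] V →ₗ[K] V)
    (t : K) (ht0 : t ≠ 0) (hroot : ∀ n : ℕ, n ≠ 0 → t ^ n ≠ 1)
    (hcenter : centerSub μ = ⊥)
    (D : V →ₗ[K] V) (hD : ∀ X Y : V, t • D (μ X Y) = μ (D X) Y) :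
    ∃ n : ℕ, D ^ n = 0 :=
  isNilpotent_of_forall_hasEigenvalue_eq_zero D fun _ hc =>
    eq_zero_of_hasEigenvalue_of_mem_derivSpace ht0 hroot hcenter hD hc

theorem stmt_13 {K V : Type*} [Field K] [CharZero K] [IsAlgClosed K]
    [AddCommGroup V] [Module K V] [FiniteDimensional K V]
    (μ : V →ₗ[K] V →ₗ[K] V) (hanti : ∀ X Y : V, μ X Y = -μ Y X)
    (t : K) (ht0 : t ≠ 0) (ht1 : t ≠ 1) (hroot : ∀ n : ℕ, n ≠ 0 → t ^ n ≠ 1)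
    (hcenter : centerSub μ = ⊥)
    (D : V →ₗ[K] V) (hD : ∀ X Y : V, t • D (μ X Y) = μ (D X) Y) :
    ∃ n : ℕ, D ^ n = 0 :=
  stmt_13_general μ t ht0 hroot hcenter D hD
end

section
/- Fix a field K of characteristic zero and s, t ∈ K with t ≠ 0, t ≠ 1. Let A_s be the 4-dimensional anti-commutative algebra with basis e₁,e₂,e₃,e₄ and nonzero products μ(e₁,e₃)=e₁, μ(e₁,e₄)=s·e₂, μ(e₂,e₃)=s·e₂ (extended anti-symmetrically). Then: if s = t, the space of (t,1,0)-derivations of A_s is 1-dimensional, spanned by the map D with D e₁ = e₂, D e₃ = e₄, D e₂ = D e₄ = 0; and if s ≠ t and s ≠ 0, the only (t,1,0)-derivation of A_s is zero. -/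
/-! Comparing both sides of `t • D (eᵢ eⱼ) = D (eᵢ) eⱼ` on basis pairs: `(e₁, e₃)` gives
`D e₁ = c e₂` with `(t - s) c = 0` (as `t ≠ 0, 1`); then `(e₁, e₄)` gives `D e₂ = 0`, `(e₃, e₃)` and
`(e₃, e₁)` give `D e₃ = d e₄` with `t c = s d`, and `(e₄, eⱼ)` gives `D e₄ = 0`. So `d = c` and
`D = c • D₀` with `(t - s) c = 0`. -/

section

variable {K : Type*} [Field K]

/-- The product of `A_s`; the paper's `eᵢ` is `Pi.single (i - 1) 1`. -/
def mulA (s : K) : (Fin 4 → K) →ₗ[K] (Fin 4 → K) →ₗ[K] (Fin 4 → K) :=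
  LinearMap.mk₂ K
    (fun X Y => (X 0 * Y 2 - X 2 * Y 0) • Pi.single 0 1 +
      (s * (X 0 * Y 3 + X 1 * Y 2 - X 3 * Y 0 - X 2 * Y 1)) • Pi.single 1 1)
    (fun _ _ _ => by simp only [Pi.add_apply]; module)
    (fun _ _ _ => by simp only [Pi.smul_apply, smul_eq_mul]; module)
    (fun _ _ _ => by simp only [Pi.add_apply]; module)
    (fun _ _ _ => by simp only [Pi.smul_apply, smul_eq_mul]; module)

@[simp]
theorem mulA_apply (s : K) (X Y : Fin 4 → K) :
    mulA s X Y = (X 0 * Y 2 - X 2 * Y 0) • Pi.single 0 1 +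
      (s * (X 0 * Y 3 + X 1 * Y 2 - X 3 * Y 0 - X 2 * Y 1)) • Pi.single 1 1 :=
  rfl

theorem eq_mulA [CharZero K] {s : K} {μ : (Fin 4 → K) →ₗ[K] (Fin 4 → K) →ₗ[K] (Fin 4 → K)}
    (hanti : ∀ X Y, μ X Y = -μ Y X)
    (h02 : μ (Pi.single 0 1) (Pi.single 2 1) = Pi.single 0 1)
    (h03 : μ (Pi.single 0 1) (Pi.single 3 1) = s • Pi.single 1 1)
    (h12 : μ (Pi.single 1 1) (Pi.single 2 1) = s • Pi.single 1 1)
    (h01 : μ (Pi.single 0 1) (Pi.single 1 1) = 0) (h13 : μ (Pi.single 1 1) (Pi.single 3 1) = 0)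
    (h23 : μ (Pi.single 2 1) (Pi.single 3 1) = 0) :
    μ = mulA s := by
  have hself (X : Fin 4 → K) : μ X X = 0 := self_eq_neg.mp (hanti X X)
  refine LinearMap.ext_basis (Pi.basisFun K (Fin 4)) (Pi.basisFun K (Fin 4)) fun i j => ?_
  fin_cases i <;> fin_cases j <;> simp [hself, h02, h03, h12, h01, h13, h23] <;>
    rw [hanti] <;> simp [h02, h03, h12, h01, h13, h23]

def derivA : (Fin 4 → K) →ₗ[K] (Fin 4 → K) where
  toFun X := X 0 • Pi.single 1 1 + X 2 • Pi.single 3 1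
  map_add' _ _ := by simp only [Pi.add_apply]; module
  map_smul' _ _ := by simp only [Pi.smul_apply, smul_eq_mul, RingHom.id_apply]; module

@[simp]
theorem derivA_apply (X : Fin 4 → K) : derivA X = X 0 • Pi.single 1 1 + X 2 • Pi.single 3 1 :=
  rfl

/-- `D` is a `(t,1,0)`-derivation of `μ`. -/
def IsTDerivation {M : Type*} [AddCommGroup M] [Module K M] (t : K) (μ : M →ₗ[K] M →ₗ[K] M)
    (D : M →ₗ[K] M) : Prop :=
  ∀ X Y, t • D (μ X Y) = μ (D X) Y

theorem isTDerivation_derivA (s : K) : IsTDerivation s (mulA s) derivA := by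
  intro X Y
  simp
  module

namespace IsTDerivation

variable {s t : K} {D : (Fin 4 → K) →ₗ[K] (Fin 4 → K)}

theorem apply_single_zero (hD : IsTDerivation t (mulA s) D) (ht0 : t ≠ 0) (ht1 : t ≠ 1) :
    D (Pi.single 0 1) = D (Pi.single 0 1) 1 • Pi.single 1 1 ∧ (t - s) * D (Pi.single 0 1) 1 = 0 := by
  have h02 := hD (Pi.single 0 1) (Pi.single 2 1)
  simp [funext_iff, Fin.forall_fin_succ, ht0] at h02
  obtain ⟨h0, h1, h2, h3⟩ := h02
  have h0' : D (Pi.single 0 1) 0 = 0 := by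
    have : (t - 1) * D (Pi.single 0 1) 0 = 0 := by linear_combination h0
    simpa [sub_ne_zero.mpr ht1] using this
  refine ⟨funext fun i => ?_, ?_⟩
  · fin_cases i <;> simp [h0', h2, h3]
  · rcases h1 with rfl | h1 <;> simp [*]

theorem apply_single_one (hD : IsTDerivation t (mulA s) D) (ht0 : t ≠ 0) (ht1 : t ≠ 1)
    (hs : s ≠ 0) : D (Pi.single 1 1) = 0 := by
  have h00 : D (Pi.single 0 1) 0 = 0 := by
    simpa using congrFun (hD.apply_single_zero ht0 ht1).1 0
  have h03 := hD (Pi.single 0 1) (Pi.single 3 1)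
  simpa [funext_iff, Fin.forall_fin_succ, ht0, hs, h00] using h03

theorem apply_single_two (hD : IsTDerivation t (mulA s) D) (ht0 : t ≠ 0) (ht1 : t ≠ 1)
    (hs : s ≠ 0) :
    D (Pi.single 2 1) = D (Pi.single 2 1) 3 • Pi.single 3 1 ∧
      t * D (Pi.single 0 1) 1 = s * D (Pi.single 2 1) 3 := by
  have h00 : D (Pi.single 0 1) 0 = 0 := by
    simpa using congrFun (hD.apply_single_zero ht0 ht1).1 0
  have h22 := hD (Pi.single 2 1) (Pi.single 2 1)
  have h20 := hD (Pi.single 2 1) (Pi.single 0 1)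
  simp [funext_iff, Fin.forall_fin_succ, ht0, hs, h00] at h22 h20 ⊢
  exact ⟨⟨h22.1.symm, h22.2, h20.1⟩, h20.2.1⟩

theorem apply_single_three (hD : IsTDerivation t (mulA s) D) (ht0 : t ≠ 0) (ht1 : t ≠ 1)
    (hs : s ≠ 0) : D (Pi.single 3 1) = 0 := by
  have h1 := hD.apply_single_one ht0 ht1 hs
  have h32 := hD (Pi.single 3 1) (Pi.single 2 1)
  have h31 := hD (Pi.single 3 1) (Pi.single 1 1)
  have h30 := hD (Pi.single 3 1) (Pi.single 0 1)
  simp [funext_iff, Fin.forall_fin_succ, hs, h1] at h32 h31 h30 ⊢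
  exact ⟨h32.1.symm, h32.2, h31, h30.2⟩

theorem exists_eq_smul_derivA (hD : IsTDerivation t (mulA s) D) (ht0 : t ≠ 0) (ht1 : t ≠ 1)
    (hs : s ≠ 0) : ∃ c, (t - s) * c = 0 ∧ D = c • derivA := by
  obtain ⟨h0, hc⟩ := hD.apply_single_zero ht0 ht1
  obtain ⟨h2, hcd⟩ := hD.apply_single_two ht0 ht1 hs
  have h23 : D (Pi.single 2 1) 3 = D (Pi.single 0 1) 1 :=
    mul_left_cancel₀ hs (by linear_combination hc - hcd)
  refine ⟨_, hc, (Pi.basisFun K (Fin 4)).ext fun i => ?_⟩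
  fin_cases i
  · simpa using h0
  · simpa using hD.apply_single_one ht0 ht1 hs
  · simpa [h23] using h2
  · simpa using hD.apply_single_three ht0 ht1 hs

end IsTDerivation

end

theorem stmt_14 {K : Type*} [Field K] [CharZero K] (s t : K) (ht0 : t ≠ 0) (ht1 : t ≠ 1)
    (μ : (Fin 4 → K) →ₗ[K] (Fin 4 → K) →ₗ[K] (Fin 4 → K))
    (hanti : ∀ X Y : Fin 4 → K, μ X Y = -μ Y X)
    (e : Fin 4 → Fin 4 → K) (he : ∀ i, e i = Pi.single i 1)
    (h13 : μ (e 0) (e 2) = e 0)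
    (h14 : μ (e 0) (e 3) = s • e 1)
    (h23 : μ (e 1) (e 2) = s • e 1)
    (h12 : μ (e 0) (e 1) = 0) (h24 : μ (e 1) (e 3) = 0) (h34 : μ (e 2) (e 3) = 0) :
    (s = t →
      ∀ D₀ : (Fin 4 → K) →ₗ[K] (Fin 4 → K),
        D₀ (e 0) = e 1 → D₀ (e 2) = e 3 → D₀ (e 1) = 0 → D₀ (e 3) = 0 →
        (∀ X Y : Fin 4 → K, t • D₀ (μ X Y) = μ (D₀ X) Y) ∧
          ∀ D : (Fin 4 → K) →ₗ[K] (Fin 4 → K),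
            (∀ X Y : Fin 4 → K, t • D (μ X Y) = μ (D X) Y) → ∃ c : K, D = c • D₀) ∧
    (s ≠ t → s ≠ 0 →
      ∀ D : (Fin 4 → K) →ₗ[K] (Fin 4 → K),
        (∀ X Y : Fin 4 → K, t • D (μ X Y) = μ (D X) Y) → D = 0) := by
  obtain rfl : e = fun i => Pi.single i 1 := funext he
  obtain rfl : μ = mulA s := eq_mulA hanti h13 h14 h23 h12 h24 h34
  refine ⟨fun hst D₀ h0 h2 h1 h3 => ?_, fun hst hs D hD => ?_⟩
  · subst hst
    obtain rfl : D₀ = derivA :=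
      (Pi.basisFun K (Fin 4)).ext fun i => by fin_cases i <;> simp [h0, h1, h2, h3]
    exact ⟨isTDerivation_derivA s, fun D hD =>
      (IsTDerivation.exists_eq_smul_derivA hD ht0 ht1 ht0).imp fun _ => And.right⟩
  · obtain ⟨c, hc, rfl⟩ := IsTDerivation.exists_eq_smul_derivA hD ht0 ht1 hs
    obtain rfl : c = 0 := (mul_eq_zero.mp hc).resolve_left (sub_ne_zero.mpr (Ne.symm hst))
    exact zero_smul K derivA
end

section
/- Let K have characteristic zero and t ∈ K with t ≠ 0, t ≠ 1. Let h₃ be the 3-dimensional Heisenberg Lie algebra with basis e₁,e₂,e₃ and ⁅e₁,e₂⁆ = e₃. Then the space of (t,1,0)-derivations of h₃ is 3-dimensional. -/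
/-!
In characteristic zero an antisymmetric product is alternating, so μ is the Heisenberg bracket
`⁅X, Y⁆ = (X₀Y₁ - X₁Y₀) e₂`. Testing `t • D ⁅eᵢ, eⱼ⁆ = ⁅D eᵢ, eⱼ⁆` on basis pairs shows that a
(t,1,0)-derivation is exactly a map of the form `D e₀ = a e₀ + b e₂`, `D e₁ = a e₁ + c e₂`,
`D e₂ = (a / t) e₂`, so the parameters `(a, b, c) ∈ K³` identify the space of such derivations
with `K³`.
-/

namespace Heisenberg

variable {K : Type*} [Field K]

variable (K) in
def bracket : (Fin 3 → K) →ₗ[K] (Fin 3 → K) →ₗ[K] (Fin 3 → K) :=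
  LinearMap.mk₂ K (fun X Y => (X 0 * Y 1 - X 1 * Y 0) • Pi.single 2 1)
    (fun _ _ _ => by rw [← add_smul]; congr 1; simp only [Pi.add_apply]; ring)
    (fun _ _ _ => by rw [smul_smul]; congr 1; simp only [Pi.smul_apply, smul_eq_mul]; ring)
    (fun _ _ _ => by rw [← add_smul]; congr 1; simp only [Pi.add_apply]; ring)
    (fun _ _ _ => by rw [smul_smul]; congr 1; simp only [Pi.smul_apply, smul_eq_mul]; ring)

theorem bracket_apply (X Y : Fin 3 → K) :
    bracket K X Y = (X 0 * Y 1 - X 1 * Y 0) • Pi.single 2 1 := rfl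

theorem eq_bracket {μ : (Fin 3 → K) →ₗ[K] (Fin 3 → K) →ₗ[K] (Fin 3 → K)} (hμ : μ.IsAlt)
    (h01 : μ (Pi.single 0 1) (Pi.single 1 1) = Pi.single 2 1)
    (h02 : μ (Pi.single 0 1) (Pi.single 2 1) = 0)
    (h12 : μ (Pi.single 1 1) (Pi.single 2 1) = 0) :
    μ = bracket K := by
  refine LinearMap.ext_basis (Pi.basisFun K (Fin 3)) (Pi.basisFun K (Fin 3)) fun i j => ?_
  simp only [Pi.basisFun_apply]
  have h10 := hμ.neg (Pi.single 0 1) (Pi.single 1 1)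
  have h20 := hμ.neg (Pi.single 0 1) (Pi.single 2 1)
  have h21 := hμ.neg (Pi.single 1 1) (Pi.single 2 1)
  fin_cases i <;> fin_cases j <;>
    simp [← h10, ← h20, ← h21, hμ.self_eq_zero, h01, h02, h12, bracket_apply]

variable (t : K)

def derivation : (Fin 3 → K) →ₗ[K] (Fin 3 → K) →ₗ[K] (Fin 3 → K) :=
  LinearMap.mk₂ K (fun v x => ![v 0 * x 0, v 0 * x 1, v 1 * x 0 + v 2 * x 1 + v 0 / t * x 2])
    (fun _ _ _ => by ext i; fin_cases i <;> simp <;> ring)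
    (fun _ _ _ => by ext i; fin_cases i <;> simp <;> ring)
    (fun _ _ _ => by ext i; fin_cases i <;> simp <;> ring)
    (fun _ _ _ => by ext i; fin_cases i <;> simp <;> ring)

theorem derivation_apply (v x : Fin 3 → K) :
    derivation t v x = ![v 0 * x 0, v 0 * x 1, v 1 * x 0 + v 2 * x 1 + v 0 / t * x 2] := rfl

variable {t}

theorem derivation_mem_derivSpace (ht : t ≠ 0) (v : Fin 3 → K) :
    derivation t v ∈ derivSpace (bracket K) t := by
  intro X Y
  ext i
  fin_cases i <;> simp [bracket_apply, derivation_apply]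
  field_simp

theorem eq_derivation_of_mem_derivSpace (ht : t ≠ 0) {D : Module.End K (Fin 3 → K)}
    (hD : D ∈ derivSpace (bracket K) t) :
    D = derivation t ![D (Pi.single 0 1) 0, D (Pi.single 0 1) 2, D (Pi.single 1 1) 2] := by
  have key (i j : Fin 3) := congrFun (hD (Pi.single i 1) (Pi.single j 1)) 2
  simp only [bracket_apply, map_smul, Pi.smul_apply, smul_eq_mul] at key
  have d01 : D (Pi.single 0 1) 1 = 0 := by simpa using key 0 0
  have d10 : D (Pi.single 1 1) 0 = 0 := by simpa using (key 1 1).symm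
  have d20 : D (Pi.single 2 1) 0 = 0 := by simpa using (key 2 1).symm
  have d21 : D (Pi.single 2 1) 1 = 0 := by simpa using key 2 0
  have d22 : t * D (Pi.single 2 1) 2 = D (Pi.single 0 1) 0 := by simpa using key 0 1
  have d11 : t * D (Pi.single 2 1) 2 = D (Pi.single 1 1) 1 := by simpa using key 1 0
  ext i j
  fin_cases i <;> fin_cases j <;>
    simp [derivation_apply, d01, d10, d20, d21, ← d11, eq_div_iff ht, mul_comm _ t, d22]

theorem derivation_injective : Function.Injective (derivation t) := by
  intro v w h
  have h0 := congrFun (LinearMap.congr_fun h (Pi.single 0 1))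
  have h1 := congrFun (LinearMap.congr_fun h (Pi.single 1 1))
  ext k
  fin_cases k
  · simpa [derivation_apply] using h0 0
  · simpa [derivation_apply] using h0 2
  · simpa [derivation_apply] using h1 2

theorem derivSpace_bracket (ht : t ≠ 0) :
    derivSpace (bracket K) t = LinearMap.range (derivation t) := by
  ext D
  exact ⟨fun hD => ⟨_, (eq_derivation_of_mem_derivSpace ht hD).symm⟩,
    fun ⟨v, hv⟩ => hv ▸ derivation_mem_derivSpace ht v⟩

theorem finrank_derivSpace_bracket (ht : t ≠ 0) :
    Module.finrank K (derivSpace (bracket K) t) = 3 := by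
  rw [derivSpace_bracket ht, LinearMap.finrank_range_of_inj derivation_injective,
    Module.finrank_fin_fun]

end Heisenberg

theorem stmt_15_general {K : Type*} [Field K] [CharZero K] (t : K) (ht0 : t ≠ 0)
    (μ : (Fin 3 → K) →ₗ[K] (Fin 3 → K) →ₗ[K] (Fin 3 → K))
    (hanti : ∀ X Y : Fin 3 → K, μ X Y = -μ Y X)
    (e : Fin 3 → Fin 3 → K) (he : ∀ i, e i = Pi.single i 1)
    (h12 : μ (e 0) (e 1) = e 2)
    (h13 : μ (e 0) (e 2) = 0) (h23 : μ (e 1) (e 2) = 0) :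
    Module.finrank K (derivSpace μ t) = 3 := by
  obtain rfl : e = fun i => Pi.single i 1 := funext he
  have hμ : μ.IsAlt := fun X => self_eq_neg.mp (hanti X X)
  rw [Heisenberg.eq_bracket hμ h12 h13 h23]
  exact Heisenberg.finrank_derivSpace_bracket ht0

theorem stmt_15 {K : Type*} [Field K] [CharZero K] (t : K) (ht0 : t ≠ 0) (ht1 : t ≠ 1)
    (μ : (Fin 3 → K) →ₗ[K] (Fin 3 → K) →ₗ[K] (Fin 3 → K))
    (hanti : ∀ X Y : Fin 3 → K, μ X Y = -μ Y X)
    (e : Fin 3 → Fin 3 → K) (he : ∀ i, e i = Pi.single i 1)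
    (h12 : μ (e 0) (e 1) = e 2)
    (h13 : μ (e 0) (e 2) = 0) (h23 : μ (e 1) (e 2) = 0) :
    Module.finrank K (derivSpace μ t) = 3 :=
  stmt_15_general t ht0 μ hanti e he h12 h13 h23
end

section
/- Let g be a Lie algebra over K (char 0), t ∈ K, and D a (t,1,0)-derivation of g. Define λ(X,Y) := ⁅D X, Y⁆. Then λ is an anti-symmetric bilinear map and (g, λ) is a Lie algebra, i.e., λ satisfies the Jacobi identity; moreover ⁅·,·⁆ + s·λ satisfies the Jacobi identity for every s ∈ K. -/
/-! Applying `D` to the Jacobi identity and using `t • D ⁅X, Y⁆ = ⁅D X, Y⁆` shows that the cyclic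
sum of `⁅D X, ⁅Y, Z⁆⁆` vanishes. Since `λ(X, Y) = ⁅D X, Y⁆ = ⁅X, D Y⁆` is skew, the same trick turns
this into the vanishing of the cyclic sum of `⁅X, ⁅D Y, Z⁆⁆`, and applying it once more gives the
Jacobi identity for `λ`. The Jacobi expression of `⁅·,·⁆ + s • λ` is the combination of these three
cyclic sums with coefficients `s`, `s`, `s ^ 2`, plus the Jacobi expression of `⁅·,·⁆`. -/

namespace LieAlgebra

variable {R L : Type*} [CommRing R] [LieRing L] [LieAlgebra R L]
  {t : R} {D : L →ₗ[R] L} (hD : ∀ X Y : L, t • D ⁅X, Y⁆ = ⁅D X, Y⁆)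
include hD

theorem lie_apply_skew (X Y : L) : ⁅D X, Y⁆ = -⁅D Y, X⁆ := by
  rw [← hD, ← hD, ← lie_skew X Y, map_neg, smul_neg]

theorem lie_apply_eq_lie_apply (X Y : L) : ⁅D X, Y⁆ = ⁅X, D Y⁆ := by
  rw [lie_apply_skew hD, ← lie_skew, neg_neg]

theorem cyclic_lie_apply_lie (X Y Z : L) :
    ⁅D X, ⁅Y, Z⁆⁆ + ⁅D Y, ⁅Z, X⁆⁆ + ⁅D Z, ⁅X, Y⁆⁆ = 0 := by
  rw [← hD, ← hD, ← hD, ← smul_add, ← smul_add, ← map_add, ← map_add, lie_jacobi,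
    map_zero, smul_zero]

theorem cyclic_lie_lie_apply (X Y Z : L) :
    ⁅X, ⁅D Y, Z⁆⁆ + ⁅Y, ⁅D Z, X⁆⁆ + ⁅Z, ⁅D X, Y⁆⁆ = 0 := by
  rw [← hD Y Z, ← hD Z X, ← hD X Y, lie_smul, lie_smul, lie_smul, ← smul_add, ← smul_add,
    ← lie_apply_eq_lie_apply hD X, ← lie_apply_eq_lie_apply hD Y,
    ← lie_apply_eq_lie_apply hD Z, cyclic_lie_apply_lie hD, smul_zero]

theorem cyclic_lie_apply_lie_apply (X Y Z : L) :
    ⁅D X, ⁅D Y, Z⁆⁆ + ⁅D Y, ⁅D Z, X⁆⁆ + ⁅D Z, ⁅D X, Y⁆⁆ = 0 := by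
  rw [← hD X ⁅D Y, Z⁆, ← hD Y ⁅D Z, X⁆, ← hD Z ⁅D X, Y⁆, ← smul_add, ← smul_add,
    ← map_add, ← map_add, cyclic_lie_lie_apply hD, map_zero, smul_zero]

theorem cyclic_lie_add_smul_lie_apply (s : R) {b : L → L → L}
    (hb : ∀ A B : L, b A B = ⁅A, B⁆ + s • ⁅D A, B⁆) (X Y Z : L) :
    b X (b Y Z) + b Y (b Z X) + b Z (b X Y) = 0 := by
  simp only [hb, lie_add, lie_smul, smul_add, smul_smul]
  linear_combination (norm := module) lie_jacobi X Y Z + s • cyclic_lie_lie_apply hD X Y Z +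
    s • cyclic_lie_apply_lie hD X Y Z + (s * s) • cyclic_lie_apply_lie_apply hD X Y Z

end LieAlgebra

theorem stmt_17_general {K L : Type*} [Field K] [LieRing L] [LieAlgebra K L]
    (t : K) (D : L →ₗ[K] L) (hD : ∀ X Y : L, t • D ⁅X, Y⁆ = ⁅D X, Y⁆) :
    (∀ X Y : L, ⁅D X, Y⁆ = -⁅D Y, X⁆) ∧
    (∀ X Y Z : L, ⁅D X, ⁅D Y, Z⁆⁆ + ⁅D Y, ⁅D Z, X⁆⁆ + ⁅D Z, ⁅D X, Y⁆⁆ = 0) ∧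
    (∀ s : K, ∀ b : L → L → L, (∀ A B : L, b A B = ⁅A, B⁆ + s • ⁅D A, B⁆) →
      ∀ X Y Z : L, b X (b Y Z) + b Y (b Z X) + b Z (b X Y) = 0) := by
  exact ⟨LieAlgebra.lie_apply_skew hD, LieAlgebra.cyclic_lie_apply_lie_apply hD,
    fun s _ hb => LieAlgebra.cyclic_lie_add_smul_lie_apply hD s hb⟩

theorem stmt_17 {K L : Type*} [Field K] [CharZero K] [LieRing L] [LieAlgebra K L]
    (t : K) (D : L →ₗ[K] L) (hD : ∀ X Y : L, t • D ⁅X, Y⁆ = ⁅D X, Y⁆) :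
    (∀ X Y : L, ⁅D X, Y⁆ = -⁅D Y, X⁆) ∧
    (∀ X Y Z : L, ⁅D X, ⁅D Y, Z⁆⁆ + ⁅D Y, ⁅D Z, X⁆⁆ + ⁅D Z, ⁅D X, Y⁆⁆ = 0) ∧
    (∀ s : K, ∀ b : L → L → L, (∀ A B : L, b A B = ⁅A, B⁆ + s • ⁅D A, B⁆) →
      ∀ X Y Z : L, b X (b Y Z) + b Y (b Z X) + b Z (b X Y) = 0) :=
  stmt_17_general t D hD
end
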